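/- Let p be a prime and let (X,R) be a finite p-regular presentation of a group G (X and R finite, every element of R non-trivial). Then there exist a normal subgroup H of G of p-power index and a finite presentation of H with g generators and r relators such that g − r − 1 ≥ [G:H] · def_p(X,R); in particular, def(H) − 1 ≥ [G:H] · def_p(X,R), where def(H) is the deficiency of H (the supremum over finite presentations of H of the number of generators minus the number of relators). -/

import Mathlib

/-!
For each relator `r = v ^ p ^ e` with `e = e_p(r) > 0`, `p`-regularity yields a normal subgroup
of `p`-power index avoiding `v ^ p ^ (e - 1)`; let `H` be their intersection and `K ≤ F(X)` its
preimage. In `F(X)/K ≅ G/H` the image of `v` then has order exactly `p ^ e`.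

`K` is free (Nielsen–Schreier), and Shapiro's lemma for the module `F(X)/K → ℤ/2` shows
`rank K ≥ [G:H] (|X| - 1) + 1`. Since `v` commutes with `r`, the conjugates of `r` by
representatives of `F(X)/K` modulo `⟨v⟩`, `[G:H] / p ^ e` of them, normally generate in `K` all
`F(X)`-conjugates of `r` (Reidemeister–Schreier), so `H` has a presentation with at most
`[G:H] Σ p ^ (-e_p(r))` relators. Finally `2 ^ (g - |Rel|) ≤ #Hom(H, ℤ/2)` for every finite
presentation of `H`, so the deficiency of `H` is a finite supremum.
-/

/-- `epIn p S w`: the largest natural number `e` such that `w` has a `p^e`-th root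
belonging to the subgroup `S` of the free group.  For `S = ⊤` this is `e_p(w, F)`. -/
noncomputable def epIn {X : Type*} (p : ℕ) (S : Subgroup (FreeGroup X)) (w : FreeGroup X) : ℕ :=
  sSup {e : ℕ | ∃ v ∈ S, v ^ p ^ e = w}

/-- A presentation of `G` (given by a projection `π : F(X) → G` and relator set `R`) is
`p`-regular if for every `r ∈ R` admitting a `p`-th root `s` in `F(X)`, the image `π s`
survives in some quotient of `G` of `p`-power order. -/
def IsPRegular (p : ℕ) {X G : Type*} [Group G] (π : FreeGroup X →* G)
    (R : Set (FreeGroup X)) : Prop :=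
  ∀ r ∈ R, ∀ s : FreeGroup X, s ^ p = r →
    ∃ N : Subgroup G, N.Normal ∧ (∃ k : ℕ, N.index = p ^ k) ∧ π s ∉ N

open Subgroup

theorem exists_pow_epIn_eq {X : Type*} (p : ℕ) {S : Subgroup (FreeGroup X)} {w : FreeGroup X}
    (hw : w ∈ S) : ∃ v ∈ S, v ^ p ^ epIn p S w = w := by
  by_cases hb : BddAbove {e : ℕ | ∃ v ∈ S, v ^ p ^ e = w}
  · exact Nat.sSup_mem ⟨0, show ∃ v ∈ S, v ^ p ^ 0 = w from ⟨w, hw, by simp⟩⟩ hb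
  · -- unbounded exponents (only for `w = 1`) give the junk value `sSup = 0`
    have h : epIn p S w = 0 := by
      rw [epIn, csSup_of_not_bddAbove hb, csSup_empty]; rfl
    exact ⟨w, hw, by rw [h, pow_zero, pow_one]⟩

theorem orderOf_eq_prime_pow_of_pow_pred_ne_one {M : Type*} [Monoid M] {p : ℕ} [Fact p.Prime]
    {x : M} {e : ℕ} (hx : x ^ p ^ e = 1) (hne : 0 < e → x ^ p ^ (e - 1) ≠ 1) :
    orderOf x = p ^ e := by
  cases e with
  | zero => simpa using hx
  | succ e => exact orderOf_eq_prime_pow (hne e.succ_pos) hx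

theorem exists_index_inf_eq_prime_pow {G : Type*} [Group G] {p : ℕ} (hp : p.Prime)
    {A B : Subgroup G} [A.Normal] (hA : ∃ k, A.index = p ^ k) (hB : ∃ k, B.index = p ^ k) :
    ∃ k, (A ⊓ B).index = p ^ k := by
  obtain ⟨a, ha⟩ := hA
  obtain ⟨b, hb⟩ := hB
  have hdvd : (A ⊓ B).index ∣ p ^ (a + b) := by
    rw [← relIndex_mul_index inf_le_right, inf_relIndex_right, pow_add, ← ha, ← hb]
    exact mul_dvd_mul (relIndex_dvd_index_of_normal A B) dvd_rfl
  obtain ⟨k, -, hk⟩ := (Nat.dvd_prime_pow hp).mp hdvd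
  exact ⟨k, hk⟩

theorem exists_normal_prime_pow_index_forall_notMem {G ι : Type*} [Group G] {p : ℕ}
    (hp : p.Prime) (s : Finset ι) (x : ι → G)
    (h : ∀ i ∈ s, ∃ N : Subgroup G, N.Normal ∧ (∃ k, N.index = p ^ k) ∧ x i ∉ N) :
    ∃ H : Subgroup G, H.Normal ∧ (∃ k, H.index = p ^ k) ∧ ∀ i ∈ s, x i ∉ H := by
  classical
  induction s using Finset.induction_on with
  | empty => exact ⟨⊤, inferInstance, ⟨0, by simp⟩, by simp⟩
  | insert a s _ ih =>
    obtain ⟨N, hN, hNidx, hxN⟩ := h a (Finset.mem_insert_self a s)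
    obtain ⟨H, hH, hHidx, hxH⟩ := ih fun i hi => h i (Finset.mem_insert_of_mem hi)
    refine ⟨N ⊓ H, inferInstance, exists_index_inf_eq_prime_pow hp hNidx hHidx, ?_⟩
    simp only [Finset.mem_insert, forall_eq_or_imp, mem_inf, not_and_or]
    exact ⟨Or.inl hxN, fun i hi => Or.inr (hxH i hi)⟩

theorem IsPRegular.exists_normal_prime_pow_index {X G : Type*} [Group G] {p : ℕ}
    (hp : p.Prime) {π : FreeGroup X →* G} {R : Finset (FreeGroup X)} (hreg : IsPRegular p π R)
    (v : FreeGroup X → FreeGroup X) (e : FreeGroup X → ℕ) (hv : ∀ r ∈ R, v r ^ p ^ e r = r) :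
    ∃ H : Subgroup G, H.Normal ∧ (∃ k, H.index = p ^ k) ∧
      ∀ r ∈ R, 0 < e r → π (v r ^ p ^ (e r - 1)) ∉ H := by
  obtain ⟨H, hH, hHidx, hvH⟩ := exists_normal_prime_pow_index_forall_notMem hp
    (R.filter (0 < e ·)) (fun r => π (v r ^ p ^ (e r - 1))) fun r hr => by
      rw [Finset.mem_filter] at hr
      refine hreg r hr.1 _ ?_
      rw [← pow_mul, ← pow_succ, Nat.sub_add_cancel hr.2, hv r hr.1]
  exact ⟨H, hH, hHidx, fun r hr he => hvH r (Finset.mem_filter.mpr ⟨hr, he⟩)⟩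

theorem MonoidHom.card_ker_mul_card_range {G G' : Type*} [Group G] [Group G'] (f : G →* G') :
    Nat.card f.ker * Nat.card f.range = Nat.card G := by
  rw [← index_ker, card_mul_index]

theorem Group.FG.finite_monoidHom (G A : Type*) [Group G] [Group.FG G] [Monoid A] [Finite A] :
    Finite (G →* A) := by
  obtain ⟨S, hS, hSfin⟩ := Group.fg_iff.mp ‹Group.FG G›
  have := hSfin.to_subtype
  exact Finite.of_injective (fun ψ : G →* A => S.domRestrict ψ) fun ψ ψ' h =>
    MonoidHom.eq_of_eqOn_dense hS fun s hs => congrFun h ⟨s, hs⟩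

theorem card_pow_le_card_pow_mul_card_monoidHom {ι H A : Type*} [Finite ι] [Group H]
    [CommGroup A] [Finite A] {φ : FreeGroup ι →* H} (hφ : Function.Surjective φ)
    (Rel : Finset (FreeGroup ι)) (hker : φ.ker = normalClosure Rel) :
    Nat.card A ^ Nat.card ι ≤ Nat.card A ^ Rel.card * Nat.card (H →* A) := by
  let ev : (FreeGroup ι →* A) →* (Rel → A) :=
    MonoidHom.pi fun r => MonoidHom.eval (r : FreeGroup ι)
  have hmem : ∀ g, g ∈ ev.ker ↔ φ.ker ≤ g.ker := fun g => by
    rw [hker, ← normalClosure_subset_iff]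
    simp [ev, Set.subset_def, funext_iff]
  have hev : ev.ker ≃ (H →* A) := (Equiv.subtypeEquivRight hmem).trans
    (φ.liftOfRightInverse _ (Function.rightInverse_surjInv hφ))
  calc Nat.card A ^ Nat.card ι = Nat.card (FreeGroup ι →* A) := by
        rw [← Nat.card_fun, Nat.card_congr FreeGroup.lift]
    _ = Nat.card ev.ker * Nat.card ev.range := (MonoidHom.card_ker_mul_card_range ev).symm
    _ ≤ Nat.card (H →* A) * Nat.card (Rel → A) := by
        rw [Nat.card_congr hev]
        exact Nat.mul_le_mul_left _ (Nat.card_le_card_of_injective _ Subtype.val_injective)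
    _ = Nat.card A ^ Rel.card * Nat.card (H →* A) := by
        rw [Nat.card_fun, Nat.card_eq_finsetCard, mul_comm]

theorem lt_add_of_two_pow_le_two_pow_mul {g r N : ℕ} (h : 2 ^ g ≤ 2 ^ r * N) : g < r + N := by
  by_contra! hle
  have : 2 ^ r * N < 2 ^ g := calc
    2 ^ r * N < 2 ^ r * 2 ^ N := Nat.mul_lt_mul_of_pos_left N.lt_two_pow_self (by positivity)
    _ = 2 ^ (r + N) := (pow_add 2 r N).symm
    _ ≤ 2 ^ g := Nat.pow_le_pow_right two_pos hle
  omega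

theorem bddAbove_deficiencies (H : Type*) [Group H] [Group.FG H] :
    BddAbove {d : ℝ | ∃ (g : ℕ) (Rel : Finset (FreeGroup (Fin g)))
      (φ : FreeGroup (Fin g) →* H),
      Function.Surjective φ ∧ φ.ker = normalClosure (Rel : Set (FreeGroup (Fin g))) ∧
      d = (g : ℝ) - Rel.card} := by
  have := Group.FG.finite_monoidHom H (Multiplicative (ZMod 2))
  refine ⟨Nat.card (H →* Multiplicative (ZMod 2)), ?_⟩
  rintro _ ⟨g, Rel, φ, hφ, hker, rfl⟩
  have h := card_pow_le_card_pow_mul_card_monoidHom (A := Multiplicative (ZMod 2)) hφ Rel hker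
  rw [Nat.card_fin, Nat.card_congr Multiplicative.toAdd, Nat.card_zmod] at h
  have := lt_add_of_two_pow_le_two_pow_mul h
  rw [sub_le_iff_le_add']
  exact_mod_cast this.le

namespace FreeGroup

variable {X : Type*} {K : Subgroup (FreeGroup X)} [K.Normal] {A : Type*} [CommGroup A]

-- `c` prescribes on the generators a 1-cocycle of `FreeGroup X` with values in the
-- coinduced module `FreeGroup X ⧸ K → A`; the cocycle is the left component of `wreathLift K c`.
variable (K) in
def wreathLift (c : X → FreeGroup X ⧸ K → A) : FreeGroup X →* A ≀ᵣ (FreeGroup X ⧸ K) :=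
  lift fun x => ⟨c x, of x⟩

@[simp]
theorem wreathLift_right (c : X → FreeGroup X ⧸ K → A) (f : FreeGroup X) :
    (wreathLift K c f).right = f := by
  have : RegularWreathProduct.rightHom.comp (wreathLift K c) = QuotientGroup.mk' K :=
    ext_hom _ _ fun x => rfl
  exact DFunLike.congr_fun this f

theorem wreathLift_mul_left (c : X → FreeGroup X ⧸ K → A) (f g : FreeGroup X) :
    (wreathLift K c (f * g)).left =
      (wreathLift K c f).left *
        fun z => (wreathLift K c g).left ((f : FreeGroup X ⧸ K)⁻¹ * z) := by
  rw [_root_.map_mul, RegularWreathProduct.mul_left, wreathLift_right]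

theorem wreathLift_mul_apply_left (c c' : X → FreeGroup X ⧸ K → A) (f : FreeGroup X) :
    (wreathLift K (c * c') f).left = (wreathLift K c f).left * (wreathLift K c' f).left := by
  let prod : FreeGroup X →* A ≀ᵣ (FreeGroup X ⧸ K) :=
    { toFun := fun f => ⟨(wreathLift K c f).left * (wreathLift K c' f).left, f⟩
      map_one' := by ext <;> simp
      map_mul' := fun f g => by
        ext z
        · simp only [wreathLift_mul_left, RegularWreathProduct.mul_left, Pi.mul_apply]
          exact mul_mul_mul_comm _ _ _ _
        · simp }
  have : wreathLift K (c * c') = prod := ext_hom _ _ fun x => by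
    ext z <;> simp [prod, wreathLift]
  rw [this]
  rfl

theorem wreathLift_one : wreathLift K (1 : X → FreeGroup X ⧸ K → A) =
    RegularWreathProduct.inl.comp (QuotientGroup.mk' K) :=
  ext_hom _ _ fun _ => by ext <;> simp [wreathLift]

variable (K A)

def restrictionHom : (X → FreeGroup X ⧸ K → A) →* (K →* A) where
  toFun c :=
    { toFun := fun k => (wreathLift K c k).left 1
      map_one' := by simp
      map_mul' := fun k k' => by
        rw [coe_mul, wreathLift_mul_left, Pi.mul_apply, (QuotientGroup.eq_one_iff _).mpr k.2,
          inv_one, one_mul] }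
  map_one' := by ext; simp [wreathLift_one]
  map_mul' c c' := by ext; simp [wreathLift_mul_apply_left]

def coboundary : (FreeGroup X ⧸ K → A) →* (X → FreeGroup X ⧸ K → A) where
  toFun m x z := m z / m ((of x : FreeGroup X ⧸ K)⁻¹ * z)
  map_one' := by ext; simp
  map_mul' m m' := by ext; simp [mul_div_mul_comm]

variable {K A}

theorem ker_restrictionHom_le_range_coboundary :
    (restrictionHom K A).ker ≤ (coboundary K A).range := by
  intro c hc
  set d : FreeGroup X → FreeGroup X ⧸ K → A := fun f => (wreathLift K c f).left
  have hK : ∀ k ∈ K, d k 1 = 1 := fun k hk => DFunLike.congr_fun hc ⟨k, hk⟩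
  let m : FreeGroup X ⧸ K → A := fun y => d y.out y
  -- `m` trivialises the cocycle `d`: compare `d` on `f * h` and on `g * (g⁻¹ * f * h)`
  have key : ∀ f z, d f z * m ((f : FreeGroup X ⧸ K)⁻¹ * z) = m z := by
    intro f z
    set g := z.out
    set h := ((f : FreeGroup X ⧸ K)⁻¹ * z).out
    have hg : (g : FreeGroup X ⧸ K) = z := QuotientGroup.out_eq' z
    have hh : (h : FreeGroup X ⧸ K) = (f : FreeGroup X ⧸ K)⁻¹ * z := QuotientGroup.out_eq' _
    have hk : g⁻¹ * (f * h) ∈ K := by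
      rw [← QuotientGroup.eq_one_iff, QuotientGroup.mk_mul, QuotientGroup.mk_mul,
        QuotientGroup.mk_inv, hg, hh]
      group
    have h₁ : d (f * h) z = d f z * m ((f : FreeGroup X ⧸ K)⁻¹ * z) := by
      simp only [d, wreathLift_mul_left, Pi.mul_apply]
      rfl
    have h₂ : d (g * (g⁻¹ * (f * h))) z = m z := by
      simp only [d, wreathLift_mul_left (g := g⁻¹ * (f * h)), Pi.mul_apply, hg, inv_mul_cancel]
      exact (congrArg _ (hK _ hk)).trans (mul_one _)
    rw [← h₁, ← h₂, mul_inv_cancel_left]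
  refine ⟨m, funext fun x => funext fun z => ?_⟩
  have hx : d (of x) = c x := by simp [d, wreathLift]
  rw [← hx]
  exact (eq_div_of_mul_eq' (key _ z)).symm

theorem card_le_card_ker_coboundary [K.FiniteIndex] [Finite A] :
    Nat.card A ≤ Nat.card (coboundary K A).ker :=
  Nat.card_le_card_of_injective (fun a => ⟨fun _ => a, by ext; simp [coboundary]⟩)
    fun _ _ hab => congrFun (congrArg Subtype.val hab) 1

variable (K A) in
theorem card_pow_index_mul_le [K.FiniteIndex] [Finite X] [Finite A] :
    Nat.card A ^ (K.index * Nat.card X) * Nat.card A ≤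
      Nat.card (K →* A) * Nat.card A ^ K.index := by
  have := Group.FG.finite_monoidHom K A
  have hM : Nat.card (FreeGroup X ⧸ K → A) = Nat.card A ^ K.index := by
    rw [Nat.card_fun, ← index_eq_card]
  calc Nat.card A ^ (K.index * Nat.card X) * Nat.card A
      = Nat.card (restrictionHom K A).ker * Nat.card (restrictionHom K A).range * Nat.card A := by
        rw [MonoidHom.card_ker_mul_card_range, Nat.card_fun, hM, ← pow_mul]
    _ ≤ Nat.card (coboundary K A).range * Nat.card (K →* A) * Nat.card (coboundary K A).ker := by
        gcongr
        · exact card_le_of_le ker_restrictionHom_le_range_coboundary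
        · exact Nat.card_le_card_of_injective _ Subtype.val_injective
        · exact card_le_card_ker_coboundary
    _ = Nat.card (K →* A) * Nat.card A ^ K.index := by
        rw [mul_right_comm, ← hM, ← MonoidHom.card_ker_mul_card_range (coboundary K A)]
        ring

end FreeGroup

theorem IsFreeGroup.finite_generators (G : Type*) [Group G] [IsFreeGroup G] [Group.FG G] :
    Finite (IsFreeGroup.Generators G) := by
  have := Group.FG.finite_monoidHom G (Multiplicative (ZMod 2))
  have := Finite.of_equiv _ (IsFreeGroup.lift (G := G) (H := Multiplicative (ZMod 2))).symm
  by_contra h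
  rw [not_finite_iff_infinite] at h
  exact not_finite (IsFreeGroup.Generators G → Multiplicative (ZMod 2))

theorem FreeGroup.index_mul_card_add_one_le_card_generators {X : Type*} [Finite X]
    (K : Subgroup (FreeGroup X)) [K.Normal] [K.FiniteIndex] :
    K.index * Nat.card X + 1 ≤ Nat.card (IsFreeGroup.Generators K) + K.index := by
  have := IsFreeGroup.finite_generators K
  have h := FreeGroup.card_pow_index_mul_le K (Multiplicative (ZMod 2))
  rw [Nat.card_congr (IsFreeGroup.lift (G := K)).symm, Nat.card_fun,
    Nat.card_congr Multiplicative.toAdd, Nat.card_zmod, ← pow_succ, ← pow_add] at h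
  exact (Nat.pow_le_pow_iff_right (by norm_num)).mp h

section Relators

variable {G : Type*} [Group G] {K : Subgroup G} [K.Normal]

theorem normalClosure_preimage_conj_eq_subgroupOf {R : Set G} (hRK : R ⊆ K) (S : G → Set G)
    (hS : ∀ r ∈ R, ∀ g : G, ∃ t ∈ S r, ∃ z, Commute z r ∧ g * (t * z)⁻¹ ∈ K) :
    normalClosure (K.subtype ⁻¹' {y | ∃ r ∈ R, ∃ t ∈ S r, y = t * r * t⁻¹}) =
      (normalClosure R).subgroupOf K := by
  set T := K.subtype ⁻¹' {y | ∃ r ∈ R, ∃ t ∈ S r, y = t * r * t⁻¹}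
  apply le_antisymm
  · have := (normalClosure_normal (s := R)).subgroupOf K
    refine normalClosure_le_normal ?_
    rintro x ⟨r, hr, t, -, hx⟩
    rw [SetLike.mem_coe, mem_subgroupOf, ← K.coe_subtype, hx]
    exact normalClosure_normal.conj_mem r (subset_normalClosure hr) t
  -- every conjugate `g r g⁻¹` is a `K`-conjugate of some `t r t⁻¹`
  have hconj : normalClosure R ≤ (normalClosure T).map K.subtype := by
    refine (closure_le _).mpr ?_
    intro b hb
    obtain ⟨r, hr, hrb⟩ := Group.mem_conjugatesOfSet_iff.mp hb
    obtain ⟨g, rfl⟩ := isConj_iff.mp hrb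
    obtain ⟨t, ht, z, hz, hk⟩ := hS r hr g
    have hy : (⟨t * r * t⁻¹, Normal.conj_mem ‹_› r (hRK hr) t⟩ : K) ∈ T := ⟨r, hr, t, ht, rfl⟩
    refine ⟨_, normalClosure_normal.conj_mem _ (subset_normalClosure hy) ⟨_, hk⟩, ?_⟩
    calc g * (t * z)⁻¹ * (t * r * t⁻¹) * (g * (t * z)⁻¹)⁻¹
        = g * (z⁻¹ * r * z) * g⁻¹ := by group
      _ = g * r * g⁻¹ := by rw [hz.inv_mul_cancel]
  intro x hx
  rw [mem_subgroupOf] at hx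
  exact (mem_map_iff_mem K.subtype_injective).mp (hconj hx)

theorem exists_finset_normalClosure_eq_subgroupOf [K.FiniteIndex] (R : Finset G)
    (hRK : ∀ r ∈ R, r ∈ K) (v : G → G) (hv : ∀ r ∈ R, Commute (v r) r) :
    ∃ T : Finset K, normalClosure (T : Set K) = (normalClosure (R : Set G)).subgroupOf K ∧
      T.card ≤ ∑ r ∈ R, Nat.card ((G ⧸ K) ⧸ zpowers (v r : G ⧸ K)) := by
  classical
  let C (r : G) := (G ⧸ K) ⧸ zpowers (v r : G ⧸ K)
  have (r : G) : Fintype (C r) := Fintype.ofFinite _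
  let ρ (r : G) (w : C r) : G := w.out.out
  let T₀ : Finset G := R.biUnion fun r => Finset.univ.image fun w => ρ r w * r * (ρ r w)⁻¹
  refine ⟨T₀.preimage K.subtype K.subtype_injective.injOn, ?_, ?_⟩
  · rw [Finset.coe_preimage, ← normalClosure_preimage_conj_eq_subgroupOf hRK
      (fun r => Set.range (ρ r))]
    · congr! 2
      ext y
      simp [T₀, eq_comm]
    intro r hr g
    obtain ⟨⟨_, j, hj⟩, hout⟩ := QuotientGroup.mk_out_eq_mul (zpowers (v r : G ⧸ K)) g
    refine ⟨_, ⟨g, rfl⟩, v r ^ (-j), (hv r hr).zpow_left _, ?_⟩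
    rw [← QuotientGroup.eq_one_iff]
    simp only [ρ, QuotientGroup.mk_mul, QuotientGroup.mk_inv, QuotientGroup.mk_zpow,
      QuotientGroup.out_eq', hout, ← hj]
    group
  · calc (T₀.preimage K.subtype _).card ≤ T₀.card :=
          Finset.card_le_card_of_injOn K.subtype (fun x hx => Finset.mem_preimage.mp hx)
            K.subtype_injective.injOn
      _ ≤ ∑ r ∈ R, (Finset.univ.image fun w => ρ r w * r * (ρ r w)⁻¹).card :=
          Finset.card_biUnion_le
      _ ≤ ∑ r ∈ R, Nat.card (C r) := Finset.sum_le_sum fun r _ =>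
          Finset.card_image_le.trans_eq (Nat.card_eq_fintype_card (α := C r)).symm

end Relators

theorem card_quotient_zpowers_mul_prime_pow {G : Type*} [Group G] {K : Subgroup G} [K.Normal]
    {p : ℕ} [Fact p.Prime] {v : G} {e : ℕ} (hv : v ^ p ^ e ∈ K)
    (hne : 0 < e → v ^ p ^ (e - 1) ∉ K) :
    Nat.card ((G ⧸ K) ⧸ zpowers (v : G ⧸ K)) * p ^ e = K.index := by
  have horder : orderOf (v : G ⧸ K) = p ^ e := by
    refine orderOf_eq_prime_pow_of_pow_pred_ne_one ?_ fun he => ?_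
    · rwa [← QuotientGroup.mk_pow, QuotientGroup.eq_one_iff]
    · rw [Ne, ← QuotientGroup.mk_pow, QuotientGroup.eq_one_iff]
      exact hne he
  rw [← horder, ← Nat.card_zpowers, ← card_eq_card_quotient_mul_card_subgroup, index_eq_card]

theorem exists_presentation_of_isFreeGroup {K H : Type*} [Group K] [Group H] [IsFreeGroup K]
    [Finite (IsFreeGroup.Generators K)] {ψ : K →* H} (hψ : Function.Surjective ψ)
    (T : Finset K) (hT : ψ.ker = normalClosure (T : Set K)) :
    ∃ (Rel : Finset (FreeGroup (Fin (Nat.card (IsFreeGroup.Generators K)))))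
      (φ : FreeGroup (Fin (Nat.card (IsFreeGroup.Generators K))) →* H),
      Function.Surjective φ ∧ φ.ker = normalClosure (Rel : Set _) ∧ Rel.card ≤ T.card := by
  classical
  let e : FreeGroup (Fin (Nat.card (IsFreeGroup.Generators K))) ≃* K :=
    (FreeGroup.freeGroupCongr (Finite.equivFin _).symm).trans (IsFreeGroup.mulEquiv K)
  refine ⟨T.image e.symm, ψ.comp e, hψ.comp e.surjective, ?_, Finset.card_image_le⟩
  rw [← MonoidHom.comap_ker, hT, Finset.coe_image, ← comap_normalClosure]
  exact congrArg normalClosure (e.toEquiv.image_symm_eq_preimage _).symm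

theorem sum_card_quotient_zpowers_eq {G : Type*} [Group G] {K : Subgroup G} [K.Normal] {p : ℕ}
    [Fact p.Prime] {R : Finset G} {v : G → G} {e : G → ℕ} (hv : ∀ r ∈ R, v r ^ p ^ e r ∈ K)
    (hne : ∀ r ∈ R, 0 < e r → v r ^ p ^ (e r - 1) ∉ K) :
    (∑ r ∈ R, Nat.card ((G ⧸ K) ⧸ zpowers (v r : G ⧸ K)) : ℝ) =
      K.index * ∑ r ∈ R, ((p : ℝ) ^ e r)⁻¹ := by
  rw [Finset.mul_sum]
  refine Finset.sum_congr rfl fun r hr => ?_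
  rw [← card_quotient_zpowers_mul_prime_pow (hv r hr) (hne r hr), Nat.cast_mul, Nat.cast_pow,
    mul_inv_cancel_right₀ (pow_ne_zero _ (Nat.cast_ne_zero.mpr (Fact.out : p.Prime).ne_zero))]

theorem exists_presentation_of_finiteIndex {X G : Type*} [Finite X] [Group G]
    {π : FreeGroup X →* G} (hsurj : Function.Surjective π) {R : Finset (FreeGroup X)}
    (hker : π.ker = normalClosure (R : Set (FreeGroup X))) (H : Subgroup G) [H.Normal]
    [H.FiniteIndex] (v : FreeGroup X → FreeGroup X) (hv : ∀ r ∈ R, Commute (v r) r) :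
    ∃ (g : ℕ) (Rel : Finset (FreeGroup (Fin g))) (φ : FreeGroup (Fin g) →* H),
      Function.Surjective φ ∧ φ.ker = normalClosure (Rel : Set (FreeGroup (Fin g))) ∧
      H.index * Nat.card X + 1 ≤ g + H.index ∧
      Rel.card ≤ ∑ r ∈ R,
        Nat.card ((FreeGroup X ⧸ H.comap π) ⧸ zpowers (v r : FreeGroup X ⧸ H.comap π)) := by
  set K := H.comap π
  have hKidx : K.index = H.index := H.index_comap_of_surjective hsurj
  have : K.FiniteIndex := ⟨hKidx ▸ FiniteIndex.index_ne_zero⟩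
  obtain ⟨T, hT, hTcard⟩ := exists_finset_normalClosure_eq_subgroupOf R
    (fun r hr => π.ker_le_comap H (hker ▸ subset_normalClosure hr)) v hv
  have hres : (π.subgroupComap H).ker = normalClosure (T : Set K) := by
    ext x
    rw [hT, mem_subgroupOf, ← hker, MonoidHom.mem_ker, MonoidHom.mem_ker, ← Subtype.val_inj]
    rfl
  have := IsFreeGroup.finite_generators K
  obtain ⟨Rel, φ, hφ, hφker, hRel⟩ := exists_presentation_of_isFreeGroup
    (π.subgroupComap_surjective_of_surjective H hsurj) T hres
  exact ⟨_, Rel, φ, hφ, hφker, hKidx ▸ FreeGroup.index_mul_card_add_one_le_card_generators K,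
    hRel.trans hTcard⟩

theorem stmt11_general (p : ℕ) (hp : p.Prime) (X : Type) [Finite X]
    (R : Finset (FreeGroup X))
    (G : Type) [Group G] (π : FreeGroup X →* G) (hsurj : Function.Surjective π)
    (hker : MonoidHom.ker π = Subgroup.normalClosure (R : Set (FreeGroup X)))
    (hreg : IsPRegular p π (R : Set (FreeGroup X))) :
    ∃ H : Subgroup G, H.Normal ∧ (∃ k : ℕ, H.index = p ^ k) ∧
      (∃ (g : ℕ) (Rel : Finset (FreeGroup (Fin g))) (φ : FreeGroup (Fin g) →* H),
        Function.Surjective φ ∧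
        MonoidHom.ker φ = Subgroup.normalClosure (Rel : Set (FreeGroup (Fin g))) ∧
        (H.index : ℝ) * ((Nat.card X : ℝ) - 1 - ∑ r ∈ R, ((p : ℝ) ^ epIn p ⊤ r)⁻¹) ≤
          (g : ℝ) - Rel.card - 1) ∧
      (H.index : ℝ) * ((Nat.card X : ℝ) - 1 - ∑ r ∈ R, ((p : ℝ) ^ epIn p ⊤ r)⁻¹) ≤
        sSup {d : ℝ | ∃ (g : ℕ) (Rel : Finset (FreeGroup (Fin g)))
            (φ : FreeGroup (Fin g) →* H),
          Function.Surjective φ ∧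
          MonoidHom.ker φ = Subgroup.normalClosure (Rel : Set (FreeGroup (Fin g))) ∧
          d = (g : ℝ) - Rel.card} - 1 := by
  have := Fact.mk hp
  choose v hv using fun r : FreeGroup X => exists_pow_epIn_eq p (mem_top r)
  obtain ⟨H, hH, ⟨k, hk⟩, hvH⟩ :=
    hreg.exists_normal_prime_pow_index hp v (epIn p ⊤) fun r _ => (hv r).2
  have : H.FiniteIndex := ⟨hk ▸ pow_ne_zero _ hp.ne_zero⟩
  obtain ⟨g, Rel, φ, hφ, hφker, hrank, hRel⟩ :=
    exists_presentation_of_finiteIndex hsurj hker H v fun r _ => by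
      simpa only [(hv r).2] using Commute.self_pow (v r) (p ^ epIn p ⊤ r)
  have hcount := sum_card_quotient_zpowers_eq (K := H.comap π) (e := epIn p ⊤)
    (fun r hr => by rw [(hv r).2]; exact π.ker_le_comap H (hker ▸ subset_normalClosure hr))
    hvH
  rw [H.index_comap_of_surjective hsurj] at hcount
  have key : (H.index : ℝ) * ((Nat.card X : ℝ) - 1 - ∑ r ∈ R, ((p : ℝ) ^ epIn p ⊤ r)⁻¹) ≤
      (g : ℝ) - Rel.card - 1 := by
    have hg : (H.index * Nat.card X + 1 : ℝ) ≤ g + H.index := by exact_mod_cast hrank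
    have hRel' : (Rel.card : ℝ) ≤ H.index * ∑ r ∈ R, ((p : ℝ) ^ epIn p ⊤ r)⁻¹ :=
      hcount ▸ by exact_mod_cast hRel
    linarith
  have := Group.fg_of_surjective hφ
  exact ⟨H, hH, ⟨k, hk⟩, ⟨g, Rel, φ, hφ, hφker, key⟩, key.trans <| sub_le_sub_right
    (le_csSup (bddAbove_deficiencies H) ⟨g, Rel, φ, hφ, hφker, rfl⟩) 1⟩

/-- Let `(X,R)` be a finite `p`-regular presentation of `G`.  Then there exist a normal
subgroup `H` of `G` of `p`-power index and a finite presentation of `H` with `g` generators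
and `r` relators such that `g - r - 1 ≥ [G:H]·def_p(X,R)`; in particular
`def(H) - 1 ≥ [G:H]·def_p(X,R)` for the deficiency `def(H)` (the supremum of `g - r` over
all finite presentations of `H`). -/
theorem stmt11 (p : ℕ) (hp : p.Prime) (X : Type) [Finite X]
    (R : Finset (FreeGroup X)) (hR : ∀ r ∈ R, r ≠ 1)
    (G : Type) [Group G] (π : FreeGroup X →* G) (hsurj : Function.Surjective π)
    (hker : MonoidHom.ker π = Subgroup.normalClosure (R : Set (FreeGroup X)))
    (hreg : IsPRegular p π (R : Set (FreeGroup X))) :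
    ∃ H : Subgroup G, H.Normal ∧ (∃ k : ℕ, H.index = p ^ k) ∧
      (∃ (g : ℕ) (Rel : Finset (FreeGroup (Fin g))) (φ : FreeGroup (Fin g) →* H),
        Function.Surjective φ ∧
        MonoidHom.ker φ = Subgroup.normalClosure (Rel : Set (FreeGroup (Fin g))) ∧
        (H.index : ℝ) * ((Nat.card X : ℝ) - 1 - ∑ r ∈ R, ((p : ℝ) ^ epIn p ⊤ r)⁻¹) ≤
          (g : ℝ) - Rel.card - 1) ∧
      (H.index : ℝ) * ((Nat.card X : ℝ) - 1 - ∑ r ∈ R, ((p : ℝ) ^ epIn p ⊤ r)⁻¹) ≤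
        sSup {d : ℝ | ∃ (g : ℕ) (Rel : Finset (FreeGroup (Fin g)))
            (φ : FreeGroup (Fin g) →* H),
          Function.Surjective φ ∧
          MonoidHom.ker φ = Subgroup.normalClosure (Rel : Set (FreeGroup (Fin g))) ∧
          d = (g : ℝ) - Rel.card} - 1 :=
  stmt11_general p hp X R G π hsurj hker hreg
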